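/- Let n, k ≥ 1 and let F : ℝⁿ × (ℝⁿ)ᵏ → ℝ be such that F² is smooth and F is k-homogeneous (F(x, λ y⁽¹⁾, …, λᵏ y⁽ᵏ⁾) = λᵏ F for all λ > 0), with g_{ij} = ½ ∂²(F²)/∂y⁽ᵏ⁾ⁱ∂y⁽ᵏ⁾ʲ invertible at every point. Let Gⁱ = (1/(2(k+1))) Σⱼ gⁱʲ ( Γ(∂F²/∂y⁽ᵏ⁾ʲ) − ∂F²/∂y⁽ᵏ⁻¹⁾ʲ ) be the canonical k-semispray coefficients, where Γ f = Σₕ ( y⁽¹⁾ʰ ∂f/∂xʰ + 2y⁽²⁾ʰ ∂f/∂y⁽¹⁾ʰ + ⋯ + k y⁽ᵏ⁾ʰ ∂f/∂y⁽ᵏ⁻¹⁾ʰ ). Then the sequence defined by ¹Gⁱ = Gⁱ and ᵐ⁺¹Gⁱ = (1/(k+1)) Σ_{α=1}^{k} Σ_{h} α y⁽ᵅ⁾ʰ ∂(ᵐGⁱ)/∂y⁽ᵅ⁾ʰ is constant: ᵐGⁱ = Gⁱ for all m ≥ 1. -/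

import Mathlib

/- STATEMENT 13: Let F be k-homogeneous with F² smooth and the fundamental
tensor g_{ij} = ½ ∂²(F²)/∂y⁽ᵏ⁾ⁱ∂y⁽ᵏ⁾ʲ invertible at every point (a Finsler space
of order k), and let Gⁱ = (1/(2(k+1))) Σⱼ gⁱʲ (Γ(∂F²/∂y⁽ᵏ⁾ʲ) − ∂F²/∂y⁽ᵏ⁻¹⁾ʲ) be
the canonical k-semispray coefficients.  Then the sequence ¹G = G,
ᵐ⁺¹Gⁱ = (1/(k+1)) Γᵏ(ᵐGⁱ) is constant: ᵐGⁱ = Gⁱ for all m ≥ 1.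
Vertical slots are 0-indexed (y⁽ᵏ⁾ is slot k−1); for k = 1 the slot
"y⁽ᵏ⁻¹⁾ = y⁽⁰⁾" is the base variable x.  `seqG n k G m` stands for ᵐ⁺¹G. -/

noncomputable section

abbrev Pt (n k : ℕ) : Type := (Fin n → ℝ) × (Fin k → Fin n → ℝ)

def scale (n k : ℕ) (lam : ℝ) (p : Pt n k) : Pt n k :=
  (p.1, fun a => lam ^ ((a : ℕ) + 1) • p.2 a)

/-- The partial derivative ∂f/∂xⁱ at p. -/
def pderivX (n k : ℕ) (f : Pt n k → ℝ) (i : Fin n) (p : Pt n k) : ℝ :=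
  fderiv ℝ f p (Pi.single i 1, 0)

/-- The partial derivative ∂f/∂y⁽ᵃ⁺¹⁾ʰ at p. -/
def pderivY (n k : ℕ) (f : Pt n k → ℝ) (a : Fin k) (h : Fin n) (p : Pt n k) : ℝ :=
  fderiv ℝ f p (0, Pi.single a (Pi.single h 1))

/-- The partial derivative ∂f/∂y⁽ᵏ⁻¹⁾ʲ; for k = 1, y⁽⁰⁾ = x is the base variable. -/
def pderivPrev (n k : ℕ) (f : Pt n k → ℝ) (j : Fin n) (p : Pt n k) : ℝ :=
  if h : 2 ≤ k then pderivY n k f ⟨k - 2, by omega⟩ j p else pderivX n k f j p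

/-- The nonlinear operator
Γ f = Σₕ (y⁽¹⁾ʰ ∂f/∂xʰ + Σ_{α=1}^{k−1} (α+1) y⁽ᵅ⁺¹⁾ʰ ∂f/∂y⁽ᵅ⁾ʰ). -/
def GammaOp (n k : ℕ) (hk : 0 < k) (f : Pt n k → ℝ) (p : Pt n k) : ℝ :=
  (∑ h, p.2 ⟨0, hk⟩ h * pderivX n k f h p) +
  ∑ a : Fin k, ∑ h,
    (if ha : (a : ℕ) + 1 < k
      then (((a : ℕ) + 2 : ℕ) : ℝ) * p.2 ⟨(a : ℕ) + 1, ha⟩ h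
      else 0) * pderivY n k f a h p

/-- The fundamental (metric) tensor g_{ij} = ½ ∂²L/∂y⁽ᵏ⁾ⁱ∂y⁽ᵏ⁾ʲ. -/
def gmet (n k : ℕ) (hk : 0 < k) (L : Pt n k → ℝ) (i j : Fin n) (p : Pt n k) : ℝ :=
  (2 : ℝ)⁻¹ *
    pderivY n k (pderivY n k L ⟨k - 1, by omega⟩ j) ⟨k - 1, by omega⟩ i p

/-- The canonical k-semispray coefficients
Gⁱ = (1/(2(k+1))) Σⱼ gⁱʲ (Γ(∂L/∂y⁽ᵏ⁾ʲ) − ∂L/∂y⁽ᵏ⁻¹⁾ʲ). -/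
def canonG (n k : ℕ) (hk : 0 < k) (L : Pt n k → ℝ)
    (ginv : Fin n → Fin n → Pt n k → ℝ) (i : Fin n) (p : Pt n k) : ℝ :=
  (2 * ((k : ℝ) + 1))⁻¹ *
    ∑ j, ginv i j p *
      (GammaOp n k hk (pderivY n k L ⟨k - 1, by omega⟩ j) p - pderivPrev n k L j p)

/-- The Liouville operator Γᵏ f = Σ_{α=1}^k Σ_h α y⁽ᵅ⁾ʰ ∂f/∂y⁽ᵅ⁾ʰ. -/
def liouvOp (n k : ℕ) (f : Pt n k → ℝ) (p : Pt n k) : ℝ :=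
  ∑ a : Fin k, ∑ h : Fin n,
    (((a : ℕ) + 1 : ℕ) : ℝ) * p.2 a h * pderivY n k f a h p

/-- The sequence of k-semispray coefficients: `seqG n k G 0 = ¹G = G` and
`seqG n k G (m+1) = (1/(k+1)) Γᵏ (seqG n k G m)` (so `seqG n k G m` is ᵐ⁺¹G). -/
def seqG (n k : ℕ) (G : Fin n → Pt n k → ℝ) : ℕ → Fin n → Pt n k → ℝ
  | 0 => G
  | (m + 1) => fun i p => ((k : ℝ) + 1)⁻¹ * liouvOp n k (seqG n k G m i) p

namespace Aux13

variable {n k : ℕ}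

def scaleCLM (n k : ℕ) (lam : ℝ) : Pt n k →L[ℝ] Pt n k :=
  LinearMap.toContinuousLinearMap
    { toFun := scale n k lam
      map_add' := by
        intro p q
        unfold scale
        refine Prod.ext rfl ?_
        funext a
        simp [smul_add]
      map_smul' := by
        intro c p
        unfold scale
        refine Prod.ext rfl ?_
        funext a
        show lam ^ ((a : ℕ) + 1) • (c • p.2) a = (c • fun b : Fin k => lam ^ ((b : ℕ) + 1) • p.2 b) a
        rw [Pi.smul_apply, Pi.smul_apply, smul_comm] }

lemma scaleCLM_apply (lam : ℝ) (p : Pt n k) : scaleCLM n k lam p = scale n k lam p := rfl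

lemma scale_one (p : Pt n k) : scale n k 1 p = p := by
  unfold scale
  refine Prod.ext rfl ?_
  funext a
  simp

lemma scale_single_x (lam : ℝ) (i : Fin n) :
    scale n k lam ((Pi.single i 1, 0) : Pt n k) = (Pi.single i 1, 0) := by
  unfold scale
  refine Prod.ext rfl ?_
  funext a
  simp

lemma scale_single_y (lam : ℝ) (a : Fin k) (h : Fin n) :
    scale n k lam ((0, Pi.single a (Pi.single h 1)) : Pt n k)
      = lam ^ ((a : ℕ) + 1) • ((0, Pi.single a (Pi.single h 1)) : Pt n k) := by
  unfold scale
  refine Prod.ext (by simp) ?_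
  funext b
  by_cases hb : b = a
  · subst hb; simp
  · simp [Pi.single_eq_of_ne hb]

lemma fderiv_scale (f : Pt n k → ℝ) {lam : ℝ} {p : Pt n k}
    (hf : DifferentiableAt ℝ f (scale n k lam p)) (v : Pt n k) :
    fderiv ℝ (fun q => f (scale n k lam q)) p v
      = fderiv ℝ f (scale n k lam p) (scale n k lam v) := by
  have h4 : fderiv ℝ (fun q => f (scale n k lam q)) p
      = (fderiv ℝ f (scale n k lam p)).comp (scaleCLM n k lam) :=
    HasFDerivAt.fderiv ((hf.hasFDerivAt).comp p ((scaleCLM n k lam).hasFDerivAt))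
  rw [h4]
  rfl


lemma pderivX_hom {r : ℕ} {f : Pt n k → ℝ} (hf : Differentiable ℝ f)
    (hhom : ∀ lam : ℝ, 0 < lam → ∀ p, f (scale n k lam p) = lam ^ r * f p)
    {lam : ℝ} (hlam : 0 < lam) (i : Fin n) (p : Pt n k) :
    pderivX n k f i (scale n k lam p) = lam ^ r * pderivX n k f i p := by
  have h1 : (fun q => f (scale n k lam q)) = fun q => lam ^ r * f q :=
    funext fun q => hhom lam hlam q
  have h2 := fderiv_scale f (lam := lam) (p := p) (hf _) ((Pi.single i 1, 0) : Pt n k)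
  rw [h1, scale_single_x, fderiv_const_mul (hf p)] at h2
  unfold pderivX
  rw [← h2]
  simp

lemma pderivY_hom {r : ℕ} {f : Pt n k → ℝ} (hf : Differentiable ℝ f)
    (hhom : ∀ lam : ℝ, 0 < lam → ∀ p, f (scale n k lam p) = lam ^ r * f p)
    {lam : ℝ} (hlam : 0 < lam) (a : Fin k) (h : Fin n) (p : Pt n k) :
    pderivY n k f a h (scale n k lam p)
      = lam ^ r / lam ^ ((a : ℕ) + 1) * pderivY n k f a h p := by
  have h1 : (fun q => f (scale n k lam q)) = fun q => lam ^ r * f q :=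
    funext fun q => hhom lam hlam q
  have h2 := fderiv_scale f (lam := lam) (p := p) (hf _) ((0, Pi.single a (Pi.single h 1)) : Pt n k)
  rw [h1, scale_single_y, fderiv_const_mul (hf p)] at h2
  rw [map_smul] at h2
  unfold pderivY
  have hne : lam ^ ((a : ℕ) + 1) ≠ 0 := pow_ne_zero _ hlam.ne'
  simp only [ContinuousLinearMap.coe_smul', Pi.smul_apply, smul_eq_mul] at h2
  field_simp
  rw [mul_comm]
  exact h2.symm

lemma smooth_pderivX {f : Pt n k → ℝ} (hf : ContDiff ℝ (⊤ : ℕ∞) f) (i : Fin n) :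
    ContDiff ℝ (⊤ : ℕ∞) (pderivX n k f i) :=
  (hf.fderiv_right (by simp)).clm_apply contDiff_const

lemma smooth_pderivY {f : Pt n k → ℝ} (hf : ContDiff ℝ (⊤ : ℕ∞) f) (a : Fin k) (h : Fin n) :
    ContDiff ℝ (⊤ : ℕ∞) (pderivY n k f a h) :=
  (hf.fderiv_right (by simp)).clm_apply contDiff_const

lemma diff_coordY (a : Fin k) (h : Fin n) :
    Differentiable ℝ (fun p : Pt n k => p.2 a h) := by
  have : (fun p : Pt n k => p.2 a h)
      = ⇑((ContinuousLinearMap.proj (R := ℝ) h).comp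
          ((ContinuousLinearMap.proj (R := ℝ) a).comp
            (ContinuousLinearMap.snd ℝ (Fin n → ℝ) (Fin k → Fin n → ℝ)))) := rfl
  rw [this]
  exact ContinuousLinearMap.differentiable _

lemma gammaOp_hom (hk : 0 < k) {r : ℕ} {f : Pt n k → ℝ} (hf : Differentiable ℝ f)
    (hhom : ∀ lam : ℝ, 0 < lam → ∀ p, f (scale n k lam p) = lam ^ r * f p)
    {lam : ℝ} (hlam : 0 < lam) (p : Pt n k) :
    GammaOp n k hk f (scale n k lam p) = lam ^ (r + 1) * GammaOp n k hk f p := by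
  have hne : lam ≠ 0 := hlam.ne'
  unfold GammaOp
  rw [mul_add, Finset.mul_sum, Finset.mul_sum]
  congr 1
  · refine Finset.sum_congr rfl fun h _ => ?_
    rw [pderivX_hom hf hhom hlam]
    have e : (scale n k lam p).2 ⟨0, hk⟩ h = lam * p.2 ⟨0, hk⟩ h := by simp [scale]
    rw [e]; ring
  · refine Finset.sum_congr rfl fun a _ => ?_
    rw [Finset.mul_sum]
    refine Finset.sum_congr rfl fun h _ => ?_
    rw [pderivY_hom hf hhom hlam]
    by_cases ha : (a : ℕ) + 1 < k
    · rw [dif_pos ha, dif_pos ha]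
      have e : (scale n k lam p).2 ⟨(a : ℕ) + 1, ha⟩ h
          = lam ^ ((a : ℕ) + 2) * p.2 ⟨(a : ℕ) + 1, ha⟩ h := by
        show lam ^ ((a : ℕ) + 1 + 1) * p.2 ⟨(a : ℕ) + 1, ha⟩ h = _
        ring
      rw [e]
      have hne2 : lam ^ ((a : ℕ) + 1) ≠ 0 := pow_ne_zero _ hne
      field_simp
      ring
    · rw [dif_neg ha, dif_neg ha]; ring

lemma euler {r : ℕ} {f : Pt n k → ℝ} {p : Pt n k} (hdiff : DifferentiableAt ℝ f p)
    (hhom : ∀ lam : ℝ, 0 < lam → ∀ q, f (scale n k lam q) = lam ^ r * f q) :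
    liouvOp n k f p = (r : ℝ) * f p := by
  classical
  set v : Pt n k := (0, fun a => ((((a : ℕ) + 1 : ℕ)) : ℝ) • p.2 a) with hv
  have hc : HasDerivAt (fun t : ℝ => scale n k t p) v 1 := by
    have hfn : (fun t : ℝ => scale n k t p)
        = fun t => (p.1, fun a : Fin k => t ^ ((a : ℕ) + 1) • p.2 a) := rfl
    rw [hfn]
    refine HasDerivAt.prodMk (hasDerivAt_const _ _) ?_
    rw [hasDerivAt_pi]
    intro a
    simpa using (hasDerivAt_pow ((a : ℕ) + 1) (1 : ℝ)).smul_const (p.2 a)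
  have h1 : HasDerivAt (fun t : ℝ => f (scale n k t p)) (fderiv ℝ f p v) 1 := by
    have hf' : HasFDerivAt f (fderiv ℝ f p) (scale n k 1 p) := by
      rw [scale_one]; exact hdiff.hasFDerivAt
    exact hf'.comp_hasDerivAt 1 hc
  have h2 : HasDerivAt (fun t : ℝ => f (scale n k t p)) ((r : ℝ) * f p) 1 := by
    have h3 : HasDerivAt (fun t : ℝ => t ^ r * f p) ((r : ℝ) * f p) 1 := by
      simpa using (hasDerivAt_pow r (1 : ℝ)).mul_const (f p)
    refine h3.congr_of_eventuallyEq ?_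
    filter_upwards [Ioi_mem_nhds (by norm_num : (0 : ℝ) < 1)] with t ht
    exact hhom t ht p
  have hDv : fderiv ℝ f p v = (r : ℝ) * f p := h1.unique h2
  have hvsum : v = ∑ a : Fin k, ∑ h : Fin n,
      ((((a : ℕ) + 1 : ℕ) : ℝ) * p.2 a h) • ((0, Pi.single a (Pi.single h 1)) : Pt n k) := by
    refine Prod.ext ?_ ?_
    · simp [Prod.fst_sum]; rfl
    · show (fun a : Fin k => ((((a : ℕ) + 1 : ℕ)) : ℝ) • p.2 a) = _
      funext b h'
      rw [Prod.snd_sum]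
      rw [Finset.sum_apply, Finset.sum_apply]
      simp only [Prod.snd_sum, Finset.sum_apply, Prod.smul_mk, Pi.smul_apply,
        Pi.single_apply, smul_eq_mul]
      simp [apply_ite (fun g : Fin n → ℝ => g h'), Pi.single_apply, mul_ite,
        Finset.sum_ite_eq, Finset.sum_ite_eq']
  calc liouvOp n k f p
      = fderiv ℝ f p v := by
        rw [hvsum, map_sum]
        unfold liouvOp
        refine Finset.sum_congr rfl fun a _ => ?_
        rw [map_sum]
        refine Finset.sum_congr rfl fun h _ => ?_
        rw [map_smul, smul_eq_mul]
        rfl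
    _ = (r : ℝ) * f p := hDv

lemma diff_gammaOp (hk : 0 < k) {f : Pt n k → ℝ} (hf : ContDiff ℝ (⊤ : ℕ∞) f) :
    Differentiable ℝ (GammaOp n k hk f) := by
  unfold GammaOp
  apply Differentiable.add
  · apply Differentiable.fun_sum
    intro h _
    exact (diff_coordY _ _).mul ((smooth_pderivX hf h).differentiable (by simp))
  · apply Differentiable.fun_sum
    intro a _
    apply Differentiable.fun_sum
    intro h _
    by_cases ha : (a : ℕ) + 1 < k
    · simp only [dif_pos ha]
      exact ((differentiable_const _).mul (diff_coordY _ _)).mul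
        ((smooth_pderivY hf a h).differentiable (by simp))
    · simp only [dif_neg ha]
      simpa using (differentiable_const (0 : ℝ)).mul
        ((smooth_pderivY hf a h).differentiable (by simp))

lemma diff_finset_prod {ι : Type*} [DecidableEq ι] (u : Finset ι) (f : ι → Pt n k → ℝ)
    (hf : ∀ i ∈ u, Differentiable ℝ (f i)) :
    Differentiable ℝ (fun p => ∏ i ∈ u, f i p) := by
  classical
  induction u using Finset.induction with
  | empty => simpa using differentiable_const (1 : ℝ)
  | @insert a s ha ih =>
    simp only [Finset.prod_insert ha]
    exact (hf a (Finset.mem_insert_self a s)).mul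
      (ih fun i hi => hf i (Finset.mem_insert_of_mem hi))

lemma diff_det {A : Pt n k → Matrix (Fin n) (Fin n) ℝ}
    (hA : ∀ i j, Differentiable ℝ fun p => A p i j) :
    Differentiable ℝ fun p => (A p).det := by
  simp only [Matrix.det_apply']
  apply Differentiable.fun_sum
  intro σ _
  exact (differentiable_const _).mul (diff_finset_prod Finset.univ _ fun i _ => hA (σ i) i)

end Aux13

open Aux13 in
theorem stmt_13 (n k : ℕ) (hn : 1 ≤ n) (hk : 0 < k)
    (F : Pt n k → ℝ) (hF : ContDiff ℝ (⊤ : ℕ∞) (fun p => (F p) ^ 2))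
    (hom : ∀ lam : ℝ, 0 < lam → ∀ p : Pt n k,
      F (scale n k lam p) = lam ^ k * F p)
    (ginv : Fin n → Fin n → Pt n k → ℝ)
    (hginv : ∀ (p : Pt n k) (i m : Fin n),
      (∑ j, ginv i j p * gmet n k hk (fun q => (F q) ^ 2) j m p)
        = if i = m then 1 else 0)
    (hginv' : ∀ (p : Pt n k) (i m : Fin n),
      (∑ j, gmet n k hk (fun q => (F q) ^ 2) i j p * ginv j m p)
        = if i = m then 1 else 0) :
    ∀ (m : ℕ) (i : Fin n) (p : Pt n k),
      seqG n k (canonG n k hk (fun q => (F q) ^ 2) ginv) m i p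
        = canonG n k hk (fun q => (F q) ^ 2) ginv i p := by
  classical
  set L : Pt n k → ℝ := fun q => (F q) ^ 2 with hLdef
  have hLsm : ContDiff ℝ (⊤ : ℕ∞) L := hF
  have hLd : Differentiable ℝ L := hLsm.differentiable (by simp)
  have hLhom : ∀ lam : ℝ, 0 < lam → ∀ p, L (scale n k lam p) = lam ^ (2 * k) * L p := by
    intro lam hlam p
    show F (scale n k lam p) ^ 2 = lam ^ (2 * k) * F p ^ 2
    rw [hom lam hlam p, mul_pow, ← pow_mul, mul_comm k 2]
  set kp : Fin k := ⟨k - 1, by omega⟩ with hkp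
  have hkpv : ((kp : ℕ) + 1) = k := by
    rw [hkp]
    exact Nat.succ_pred_eq_of_pos hk
  -- homogeneity of the first vertical derivative of L
  have hg1sm : ∀ j, ContDiff ℝ (⊤ : ℕ∞) (pderivY n k L kp j) := fun j => smooth_pderivY hLsm kp j
  have hg1hom : ∀ (j : Fin n) (lam : ℝ), 0 < lam → ∀ p,
      pderivY n k L kp j (scale n k lam p) = lam ^ k * pderivY n k L kp j p := by
    intro j lam hlam p
    rw [pderivY_hom hLd hLhom hlam kp j p]
    congr 1
    rw [hkpv, two_mul, pow_add, mul_div_assoc, div_self (pow_ne_zero _ hlam.ne'), mul_one]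
  -- homogeneity of the fundamental tensor: degree 0
  have hghom : ∀ (i j : Fin n) (lam : ℝ), 0 < lam → ∀ p,
      gmet n k hk L i j (scale n k lam p) = gmet n k hk L i j p := by
    intro i j lam hlam p
    show (2:ℝ)⁻¹ * pderivY n k (pderivY n k L kp j) kp i (scale n k lam p)
      = (2:ℝ)⁻¹ * pderivY n k (pderivY n k L kp j) kp i p
    congr 1
    rw [pderivY_hom ((hg1sm j).differentiable (by simp)) (hg1hom j) hlam kp i p, hkpv,
      div_self (pow_ne_zero _ hlam.ne'), one_mul]
  -- matrices
  set Mm : Pt n k → Matrix (Fin n) (Fin n) ℝ :=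
    fun p => Matrix.of fun i j => gmet n k hk L i j p with hMm
  set Gi : Pt n k → Matrix (Fin n) (Fin n) ℝ :=
    fun p => Matrix.of fun i j => ginv i j p with hGi
  have hMG : ∀ p, Mm p * Gi p = 1 := by
    intro p
    ext i m
    rw [Matrix.mul_apply, Matrix.one_apply]
    simpa [hMm, hGi] using hginv' p i m
  have hGM : ∀ p, Gi p * Mm p = 1 := by
    intro p
    ext i m
    rw [Matrix.mul_apply, Matrix.one_apply]
    simpa [hMm, hGi] using hginv p i m
  -- homogeneity of the inverse tensor: degree 0
  have hGihom : ∀ (i j : Fin n) (lam : ℝ), 0 < lam → ∀ p,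
      ginv i j (scale n k lam p) = ginv i j p := by
    intro i j lam hlam p
    have hM : Mm (scale n k lam p) = Mm p := by
      ext a b
      exact hghom a b lam hlam p
    have h1 : Gi (scale n k lam p) * Mm p = 1 := by rw [← hM]; exact hGM _
    have h2 : Mm p * Gi p = 1 := hMG p
    have h3 : Gi p = Gi (scale n k lam p) := Matrix.right_inv_eq_left_inv h2 h1
    show Gi (scale n k lam p) i j = Gi p i j
    rw [← h3]
  -- homogeneity of pderivPrev : degree k+1
  have hprevhom : ∀ (j : Fin n) (lam : ℝ), 0 < lam → ∀ p,
      pderivPrev n k L j (scale n k lam p) = lam ^ (k + 1) * pderivPrev n k L j p := by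
    intro j lam hlam p
    unfold pderivPrev
    split_ifs with h2
    · rw [pderivY_hom hLd hLhom hlam ⟨k - 2, by omega⟩ j p]
      congr 1
      have e : ((⟨k - 2, by omega⟩ : Fin k) : ℕ) + 1 = k - 1 := by
        show k - 2 + 1 = k - 1
        omega
      rw [e]
      have e2 : 2 * k = (k + 1) + (k - 1) := by omega
      rw [e2, pow_add, mul_div_assoc, div_self (pow_ne_zero _ hlam.ne'), mul_one]
    · have hk1 : k = 1 := by omega
      rw [pderivX_hom hLd hLhom hlam j p]
      have e3 : 2 * k = k + 1 := by omega
      rw [e3]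
  -- homogeneity of the canonical coefficients : degree k+1
  have hGhom : ∀ (i : Fin n) (lam : ℝ), 0 < lam → ∀ p,
      canonG n k hk L ginv i (scale n k lam p)
        = lam ^ (k + 1) * canonG n k hk L ginv i p := by
    intro i lam hlam p
    unfold canonG
    have hsum : (∑ j, ginv i j (scale n k lam p) *
          (GammaOp n k hk (pderivY n k L ⟨k - 1, by omega⟩ j) (scale n k lam p)
            - pderivPrev n k L j (scale n k lam p)))
        = lam ^ (k + 1) * ∑ j, ginv i j p *
          (GammaOp n k hk (pderivY n k L ⟨k - 1, by omega⟩ j) p - pderivPrev n k L j p) := by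
      rw [Finset.mul_sum]
      refine Finset.sum_congr rfl fun j _ => ?_
      rw [hGihom i j lam hlam p, hprevhom j lam hlam p,
        gammaOp_hom hk ((hg1sm j).differentiable (by simp)) (hg1hom j) hlam p]
      ring
    rw [hsum]
    ring
  -- differentiability of entries of Mm, of det, adjugate, ginv
  have hdiff_gmet : ∀ i j, Differentiable ℝ fun p => gmet n k hk L i j p := by
    intro i j
    have e : (fun p => gmet n k hk L i j p)
        = fun p => (2:ℝ)⁻¹ * pderivY n k (pderivY n k L kp j) kp i p := rfl
    rw [e]
    exact ((smooth_pderivY (hg1sm j) kp i).differentiable (by simp)).const_mul _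
  have hdet_ne : ∀ p, (Mm p).det ≠ 0 := fun p =>
    Matrix.det_ne_zero_of_left_inverse (hGM p)
  have hdiff_det : Differentiable ℝ fun p => (Mm p).det :=
    diff_det fun i j => hdiff_gmet i j
  have hdiff_adj : ∀ i j, Differentiable ℝ fun p => (Mm p).adjugate i j := by
    intro i j
    have e : (fun p => (Mm p).adjugate i j)
        = fun p => ((Mm p).updateRow j (Pi.single i 1)).det := by
      funext p
      rw [Matrix.adjugate_apply]
    rw [e]
    apply diff_det
    intro a b
    have e2 : (fun p => (Mm p).updateRow j (Pi.single i 1) a b)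
        = fun p => if a = j then (Pi.single i (1:ℝ) : Fin n → ℝ) b else Mm p a b := by
      funext p
      rw [Matrix.updateRow_apply]
    rw [e2]
    split_ifs with hab
    · exact differentiable_const _
    · exact hdiff_gmet a b
  have hdiff_ginv : ∀ i j, Differentiable ℝ fun p => ginv i j p := by
    intro i j
    have hGieq : ∀ p, ginv i j p = ((Mm p).det)⁻¹ * (Mm p).adjugate i j := by
      intro p
      have h1 : (Mm p)⁻¹ = Gi p := Matrix.inv_eq_right_inv (hMG p)
      have h2 : (Mm p)⁻¹ = Ring.inverse (Mm p).det • (Mm p).adjugate := Matrix.inv_def _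
      have h3 : Gi p = Ring.inverse (Mm p).det • (Mm p).adjugate := by rw [← h1, h2]
      calc ginv i j p = Gi p i j := rfl
        _ = (Ring.inverse (Mm p).det • (Mm p).adjugate) i j := by rw [h3]
        _ = ((Mm p).det)⁻¹ * (Mm p).adjugate i j := by
            rw [Ring.inverse_eq_inv]
            simp [Matrix.smul_apply]
    have e : (fun p => ginv i j p) = fun p => ((Mm p).det)⁻¹ * (Mm p).adjugate i j :=
      funext hGieq
    rw [e]
    exact (hdiff_det.inv hdet_ne).mul (hdiff_adj i j)
  have hdiff_prev : ∀ j, Differentiable ℝ (pderivPrev n k L j) := by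
    intro j
    unfold pderivPrev
    split_ifs with h2
    · exact (smooth_pderivY hLsm _ j).differentiable (by simp)
    · exact (smooth_pderivX hLsm j).differentiable (by simp)
  have hdiffG : ∀ i, Differentiable ℝ (canonG n k hk L ginv i) := by
    intro i
    unfold canonG
    apply Differentiable.const_mul
    apply Differentiable.fun_sum
    intro j _
    exact (hdiff_ginv i j).mul
      ((diff_gammaOp hk (smooth_pderivY hLsm _ j)).sub (hdiff_prev j))
  -- main induction
  intro m
  induction m with
  | zero => intro i p; rfl
  | succ m ih =>
    intro i p
    have hfun : seqG n k (canonG n k hk L ginv) m i = canonG n k hk L ginv i :=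
      funext fun q => ih i q
    show ((k : ℝ) + 1)⁻¹ * liouvOp n k (seqG n k (canonG n k hk L ginv) m i) p
        = canonG n k hk L ginv i p
    rw [hfun, euler ((hdiffG i) p) (fun lam hlam q => hGhom i lam hlam q)]
    have e : (((k + 1 : ℕ)) : ℝ) = (k : ℝ) + 1 := by push_cast; ring
    rw [e, ← mul_assoc, inv_mul_cancel₀ (by positivity), one_mul]
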